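/- Let f be a MAC vector field on Omega=(0,L)^3 satisfying the no-penetration boundary condition. Then: (1) there exists a unique pair (u,p), where u is a MAC vector field satisfying the no-penetration and free-slip boundary conditions and p is a zero-mean cell-centered grid function (with Neumann ghost values), such that -Delta_h u + u + grad_h p = -f componentwise at every interior face and div_h u = 0 at every cell; and (2) this u is also the unique MAC vector field satisfying the no-penetration and free-slip boundary conditions such that -Delta_h u + u = -P_H^h f at every interior face, where P_H^h f := f + grad_h q and q is the unique zero-mean cell-centered solution of -Delta_h q = div_h f. -/

import Mathlib

open Finset

noncomputable section

/-! Finite–difference / MAC-grid framework on Ω = (0,L)³ with N cells per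
direction and mesh size h = L/N.  A cell-centered grid function is a map
`ℤ → ℤ → ℤ → ℝ` whose meaningful values are at indices in {1,…,N}³; ghost
values are given by the discrete homogeneous Neumann (reflection) condition,
implemented by clamping indices to {1,…,N}.  The x-component of a MAC vector
field is recorded so that `ux i j k` is the value at the x-face (i+1/2,j,k),
0 ≤ i ≤ N, 1 ≤ j,k ≤ N (analogously for the y,z components), and the
free-slip condition prescribes the tangential ghost values by reflection,
again implemented by clamping the tangential indices. -/

/-- Index clamped into `{1,…,N}`: implements the reflection ghost values. -/
def clampIdx (N : ℕ) (i : ℤ) : ℤ := max 1 (min i (N : ℤ))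

/-- Extension of a cell-centered grid function by the discrete homogeneous
Neumann (reflection) ghost values. -/
def nExt (N : ℕ) (φ : ℤ → ℤ → ℤ → ℝ) (i j k : ℤ) : ℝ :=
  φ (clampIdx N i) (clampIdx N j) (clampIdx N k)

/-- The cell indices `{1,…,N}`. -/
def cellIdx (N : ℕ) : Finset ℤ := Finset.Icc 1 (N : ℤ)

/-- The interior-face indices `{1,…,N-1}`. -/
def faceIdx (N : ℕ) : Finset ℤ := Finset.Icc 1 ((N : ℤ) - 1)

/-- Cell-centered discrete inner product `(φ,ψ) = h³ Σ φψ`. -/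
def cip (N : ℕ) (h : ℝ) (φ ψ : ℤ → ℤ → ℤ → ℝ) : ℝ :=
  h ^ 3 * ∑ i ∈ cellIdx N, ∑ j ∈ cellIdx N, ∑ k ∈ cellIdx N, φ i j k * ψ i j k

/-- Zero discrete mean: `Σ_{i,j,k=1}^N φ_{ijk} = 0`. -/
def zeroMean (N : ℕ) (φ : ℤ → ℤ → ℤ → ℝ) : Prop :=
  ∑ i ∈ cellIdx N, ∑ j ∈ cellIdx N, ∑ k ∈ cellIdx N, φ i j k = 0

/-- Two cell-centered functions agree on all cells. -/
def CellEqOn (N : ℕ) (φ ψ : ℤ → ℤ → ℤ → ℝ) : Prop :=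
  ∀ i ∈ cellIdx N, ∀ j ∈ cellIdx N, ∀ k ∈ cellIdx N, φ i j k = ψ i j k

/-- Discrete maximum norm over the cells. -/
def cInf (N : ℕ) (φ : ℤ → ℤ → ℤ → ℝ) : ℝ :=
  sSup {r : ℝ | ∃ i ∈ cellIdx N, ∃ j ∈ cellIdx N, ∃ k ∈ cellIdx N, r = |φ i j k|}

/-- `D_x φ` at the x-face `(i+1/2,j,k)` (recorded at index `(i,j,k)`);
it vanishes at the boundary faces `i = 0, N` by the Neumann ghost values. -/
def Dx (N : ℕ) (h : ℝ) (φ : ℤ → ℤ → ℤ → ℝ) (i j k : ℤ) : ℝ :=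
  (nExt N φ (i + 1) j k - nExt N φ i j k) / h

/-- `D_y φ` at the y-face `(i,j+1/2,k)`. -/
def Dy (N : ℕ) (h : ℝ) (φ : ℤ → ℤ → ℤ → ℝ) (i j k : ℤ) : ℝ :=
  (nExt N φ i (j + 1) k - nExt N φ i j k) / h

/-- `D_z φ` at the z-face `(i,j,k+1/2)`. -/
def Dz (N : ℕ) (h : ℝ) (φ : ℤ → ℤ → ℤ → ℝ) (i j k : ℤ) : ℝ :=
  (nExt N φ i j (k + 1) - nExt N φ i j k) / h

/-- Cell-centered discrete Laplacian, using the Neumann ghost values. -/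
def lapC (N : ℕ) (h : ℝ) (φ : ℤ → ℤ → ℤ → ℝ) (i j k : ℤ) : ℝ :=
  (nExt N φ (i + 1) j k + nExt N φ (i - 1) j k + nExt N φ i (j + 1) k +
      nExt N φ i (j - 1) k + nExt N φ i j (k + 1) + nExt N φ i j (k - 1) -
      6 * nExt N φ i j k) / h ^ 2

/-- `‖∇_h φ‖₂²`: sum of squared differences over all interior faces. -/
def gradSq (N : ℕ) (h : ℝ) (φ : ℤ → ℤ → ℤ → ℝ) : ℝ :=
  h ^ 3 *
    ((∑ i ∈ faceIdx N, ∑ j ∈ cellIdx N, ∑ k ∈ cellIdx N, Dx N h φ i j k ^ 2) +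
      (∑ i ∈ cellIdx N, ∑ j ∈ faceIdx N, ∑ k ∈ cellIdx N, Dy N h φ i j k ^ 2) +
      (∑ i ∈ cellIdx N, ∑ j ∈ cellIdx N, ∑ k ∈ faceIdx N, Dz N h φ i j k ^ 2))

/-- Face inner product `[f,g]_x`. -/
def ipFX (N : ℕ) (h : ℝ) (f g : ℤ → ℤ → ℤ → ℝ) : ℝ :=
  h ^ 3 / 2 * ∑ i ∈ cellIdx N, ∑ j ∈ cellIdx N, ∑ k ∈ cellIdx N,
    (f i j k * g i j k + f (i - 1) j k * g (i - 1) j k)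

/-- Face inner product `[f,g]_y`. -/
def ipFY (N : ℕ) (h : ℝ) (f g : ℤ → ℤ → ℤ → ℝ) : ℝ :=
  h ^ 3 / 2 * ∑ i ∈ cellIdx N, ∑ j ∈ cellIdx N, ∑ k ∈ cellIdx N,
    (f i j k * g i j k + f i (j - 1) k * g i (j - 1) k)

/-- Face inner product `[f,g]_z`. -/
def ipFZ (N : ℕ) (h : ℝ) (f g : ℤ → ℤ → ℤ → ℝ) : ℝ :=
  h ^ 3 / 2 * ∑ i ∈ cellIdx N, ∑ j ∈ cellIdx N, ∑ k ∈ cellIdx N,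
    (f i j k * g i j k + f i j (k - 1) * g i j (k - 1))

/-- MAC inner product of two vector fields. -/
def macIP (N : ℕ) (h : ℝ) (ux uy uz vx vy vz : ℤ → ℤ → ℤ → ℝ) : ℝ :=
  ipFX N h ux vx + ipFY N h uy vy + ipFZ N h uz vz

/-- Discrete divergence at the cell `(i,j,k)`. -/
def divH (h : ℝ) (ux uy uz : ℤ → ℤ → ℤ → ℝ) (i j k : ℤ) : ℝ :=
  (ux i j k - ux (i - 1) j k + uy i j k - uy i (j - 1) k +
    uz i j k - uz i j (k - 1)) / h

/-- No-penetration boundary condition: the normal boundary face values vanish. -/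
def NoPen (N : ℕ) (ux uy uz : ℤ → ℤ → ℤ → ℝ) : Prop :=
  (∀ j ∈ cellIdx N, ∀ k ∈ cellIdx N, ux 0 j k = 0 ∧ ux (N : ℤ) j k = 0) ∧
  (∀ i ∈ cellIdx N, ∀ k ∈ cellIdx N, uy i 0 k = 0 ∧ uy i (N : ℤ) k = 0) ∧
  (∀ i ∈ cellIdx N, ∀ j ∈ cellIdx N, uz i j 0 = 0 ∧ uz i j (N : ℤ) = 0)

/-- Free-slip (reflection) extension of the x-face component in the
tangential directions. -/
def fExtX (N : ℕ) (f : ℤ → ℤ → ℤ → ℝ) (i j k : ℤ) : ℝ :=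
  f i (clampIdx N j) (clampIdx N k)

/-- Free-slip extension of the y-face component. -/
def fExtY (N : ℕ) (f : ℤ → ℤ → ℤ → ℝ) (i j k : ℤ) : ℝ :=
  f (clampIdx N i) j (clampIdx N k)

/-- Free-slip extension of the z-face component. -/
def fExtZ (N : ℕ) (f : ℤ → ℤ → ℤ → ℝ) (i j k : ℤ) : ℝ :=
  f (clampIdx N i) (clampIdx N j) k

/-- Face-centered discrete Laplacian of the x-component (seven-point stencil,
free-slip ghost values in the tangential directions). -/
def lapFX (N : ℕ) (h : ℝ) (f : ℤ → ℤ → ℤ → ℝ) (i j k : ℤ) : ℝ :=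
  (fExtX N f (i + 1) j k + fExtX N f (i - 1) j k + fExtX N f i (j + 1) k +
      fExtX N f i (j - 1) k + fExtX N f i j (k + 1) + fExtX N f i j (k - 1) -
      6 * fExtX N f i j k) / h ^ 2

/-- Face-centered discrete Laplacian of the y-component. -/
def lapFY (N : ℕ) (h : ℝ) (f : ℤ → ℤ → ℤ → ℝ) (i j k : ℤ) : ℝ :=
  (fExtY N f (i + 1) j k + fExtY N f (i - 1) j k + fExtY N f i (j + 1) k +
      fExtY N f i (j - 1) k + fExtY N f i j (k + 1) + fExtY N f i j (k - 1) -
      6 * fExtY N f i j k) / h ^ 2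

/-- Face-centered discrete Laplacian of the z-component. -/
def lapFZ (N : ℕ) (h : ℝ) (f : ℤ → ℤ → ℤ → ℝ) (i j k : ℤ) : ℝ :=
  (fExtZ N f (i + 1) j k + fExtZ N f (i - 1) j k + fExtZ N f i (j + 1) k +
      fExtZ N f i (j - 1) k + fExtZ N f i j (k + 1) + fExtZ N f i j (k - 1) -
      6 * fExtZ N f i j k) / h ^ 2

/-- Face average `A_x φ` at the x-face `(i+1/2,j,k)`. -/
def AxF (N : ℕ) (φ : ℤ → ℤ → ℤ → ℝ) (i j k : ℤ) : ℝ :=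
  (nExt N φ (i + 1) j k + nExt N φ i j k) / 2

/-- Face average `A_y φ`. -/
def AyF (N : ℕ) (φ : ℤ → ℤ → ℤ → ℝ) (i j k : ℤ) : ℝ :=
  (nExt N φ i (j + 1) k + nExt N φ i j k) / 2

/-- Face average `A_z φ`. -/
def AzF (N : ℕ) (φ : ℤ → ℤ → ℤ → ℝ) (i j k : ℤ) : ℝ :=
  (nExt N φ i j (k + 1) + nExt N φ i j k) / 2

/-- The coupled discrete Stokes system with data `f`: `u` satisfies
no-penetration (free-slip ghost values are built into `lapFX/lapFY/lapFZ`),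
`p` has zero mean, the momentum equations `-Δ_h u + u + ∇_h p = -f` hold at
every interior face, and `∇_h · u = 0` at every cell. -/
def StokesSol (N : ℕ) (h : ℝ) (fx fy fz ux uy uz p : ℤ → ℤ → ℤ → ℝ) : Prop :=
  NoPen N ux uy uz ∧ zeroMean N p ∧
  (∀ i ∈ faceIdx N, ∀ j ∈ cellIdx N, ∀ k ∈ cellIdx N,
    -lapFX N h ux i j k + ux i j k + Dx N h p i j k = -fx i j k) ∧
  (∀ i ∈ cellIdx N, ∀ j ∈ faceIdx N, ∀ k ∈ cellIdx N,
    -lapFY N h uy i j k + uy i j k + Dy N h p i j k = -fy i j k) ∧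
  (∀ i ∈ cellIdx N, ∀ j ∈ cellIdx N, ∀ k ∈ faceIdx N,
    -lapFZ N h uz i j k + uz i j k + Dz N h p i j k = -fz i j k) ∧
  (∀ i ∈ cellIdx N, ∀ j ∈ cellIdx N, ∀ k ∈ cellIdx N, divH h ux uy uz i j k = 0)

/-- The projected problem with data `g`: `u` satisfies no-penetration
(free-slip ghosts built into the face Laplacians) and
`-Δ_h u + u = -g` at every interior face. -/
def ProjSol (N : ℕ) (h : ℝ) (gx gy gz ux uy uz : ℤ → ℤ → ℤ → ℝ) : Prop :=
  NoPen N ux uy uz ∧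
  (∀ i ∈ faceIdx N, ∀ j ∈ cellIdx N, ∀ k ∈ cellIdx N,
    -lapFX N h ux i j k + ux i j k = -gx i j k) ∧
  (∀ i ∈ cellIdx N, ∀ j ∈ faceIdx N, ∀ k ∈ cellIdx N,
    -lapFY N h uy i j k + uy i j k = -gy i j k) ∧
  (∀ i ∈ cellIdx N, ∀ j ∈ cellIdx N, ∀ k ∈ faceIdx N,
    -lapFZ N h uz i j k + uz i j k = -gz i j k)

/-- Two MAC vector fields agree at all (meaningful) faces. -/
def MacEqOn (N : ℕ) (ux uy uz vx vy vz : ℤ → ℤ → ℤ → ℝ) : Prop :=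
  (∀ i ∈ Finset.Icc 0 (N : ℤ), ∀ j ∈ cellIdx N, ∀ k ∈ cellIdx N, ux i j k = vx i j k) ∧
  (∀ i ∈ cellIdx N, ∀ j ∈ Finset.Icc 0 (N : ℤ), ∀ k ∈ cellIdx N, uy i j k = vy i j k) ∧
  (∀ i ∈ cellIdx N, ∀ j ∈ cellIdx N, ∀ k ∈ Finset.Icc 0 (N : ℤ), uz i j k = vz i j k)


/-! Taking the discrete divergence of the momentum equation and using `div_h ∇_h = Δ_h` and
`div_h (Δ_h u) = Δ_h (div_h u)`, valid for no-penetration, free-slip fields, shows that the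
pressure of any solution solves the Neumann problem `-Δ_h p = div_h f`; its zero-mean solution
`q` is unique by the discrete Liouville theorem. Hence `p = q`, and `u` solves the decoupled face
problems `-Δ_h u + u = -(f + ∇_h q)`, which are uniquely solvable by the discrete maximum
principle. Conversely, the divergence `d` of the solution of these decoupled problems satisfies
`-Δ_h d + d = 0`, so `d = 0` and it solves the coupled system. In finite dimension every
existence statement follows from the corresponding uniqueness statement. -/

theorem LinearMap.exists_eqOn_of_uniqueOn {K α : Type*} [Field K] (S : Finset α)
    (A : (α → K) →ₗ[K] α → K)
    (hA : ∀ u : α → K, (∀ x ∉ S, u x = 0) → (∀ x ∈ S, A u x = 0) → ∀ x ∈ S, u x = 0)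
    (g : α → K) : ∃ u : α → K, (∀ x ∉ S, u x = 0) ∧ ∀ x ∈ S, A u x = g x := by
  classical
  let ext := Function.ExtendByZero.linearMap K ((↑) : S → α)
  have ext_mem (v : S → K) (x : S) : ext v x = v x :=
    Subtype.val_injective.extend_apply _ _ x
  have ext_notMem (v : S → K) (x : α) (hx : x ∉ S) : ext v x = 0 :=
    Function.extend_apply' _ _ _ fun ⟨y, hy⟩ => hx (hy ▸ y.2)
  let T := LinearMap.funLeft K K ((↑) : S → α) ∘ₗ A ∘ₗ ext
  have hT : Function.Injective T := by
    refine (injective_iff_map_eq_zero T).2 fun v hv => funext fun x => ?_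
    rw [Pi.zero_apply, ← ext_mem v x]
    exact hA (ext v) (ext_notMem v) (fun y hy => congrFun hv ⟨y, hy⟩) x x.2
  obtain ⟨v, hv⟩ := LinearMap.injective_iff_surjective.1 hT fun x => g x
  exact ⟨ext v, ext_notMem v, fun x hx => congrFun hv ⟨x, hx⟩⟩

section Index

variable {N : ℕ}

@[simp] lemma mem_cellIdx {i : ℤ} : i ∈ cellIdx N ↔ 1 ≤ i ∧ i ≤ N := Finset.mem_Icc

@[simp] lemma mem_faceIdx {i : ℤ} : i ∈ faceIdx N ↔ 1 ≤ i ∧ i ≤ N - 1 := Finset.mem_Icc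

lemma mem_faceIdx_iff {i : ℤ} : i ∈ faceIdx N ↔ i ∈ cellIdx N ∧ i + 1 ∈ cellIdx N := by
  simp only [mem_faceIdx, mem_cellIdx]; omega

lemma mem_cellIdx_iff_mem_Icc {i : ℤ} :
    i ∈ cellIdx N ↔ i - 1 ∈ Finset.Icc 0 (N : ℤ) ∧ i ∈ Finset.Icc 0 (N : ℤ) := by
  simp only [mem_cellIdx, Finset.mem_Icc]; omega

lemma zero_notMem_faceIdx : (0 : ℤ) ∉ faceIdx N := by simp

lemma natCast_notMem_faceIdx : (N : ℤ) ∉ faceIdx N := by simp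

lemma clampIdx_of_mem {i : ℤ} (hi : i ∈ cellIdx N) : clampIdx N i = i := by
  rw [mem_cellIdx] at hi; unfold clampIdx; omega

lemma clampIdx_mem (hN : 0 < N) (i : ℤ) : clampIdx N i ∈ cellIdx N := by
  rw [mem_cellIdx]; unfold clampIdx; omega

lemma clampIdx_clampIdx (hN : 0 < N) (i : ℤ) : clampIdx N (clampIdx N i) = clampIdx N i :=
  clampIdx_of_mem (clampIdx_mem hN i)

lemma clampIdx_zero : clampIdx N 0 = clampIdx N 1 := by unfold clampIdx; omega

lemma clampIdx_natCast_add_one : clampIdx N ((N : ℤ) + 1) = clampIdx N N := by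
  unfold clampIdx; omega

lemma nExt_clampIdx (hN : 0 < N) (φ : ℤ → ℤ → ℤ → ℝ) (i j k : ℤ) :
    nExt N φ (clampIdx N i) (clampIdx N j) (clampIdx N k) = nExt N φ i j k := by
  simp only [nExt, clampIdx_clampIdx hN]

lemma nExt_of_mem {φ : ℤ → ℤ → ℤ → ℝ} {i j k : ℤ} (hi : i ∈ cellIdx N) (hj : j ∈ cellIdx N)
    (hk : k ∈ cellIdx N) : nExt N φ i j k = φ i j k := by
  rw [nExt, clampIdx_of_mem hi, clampIdx_of_mem hj, clampIdx_of_mem hk]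

lemma nExt_congr (hN : 0 < N) {φ ψ : ℤ → ℤ → ℤ → ℝ} (hφψ : CellEqOn N φ ψ) :
    nExt N φ = nExt N ψ := by
  ext i j k
  exact hφψ _ (clampIdx_mem hN i) _ (clampIdx_mem hN j) _ (clampIdx_mem hN k)

def cells (N : ℕ) : Finset (ℤ × ℤ × ℤ) := cellIdx N ×ˢ cellIdx N ×ˢ cellIdx N

def facesX (N : ℕ) : Finset (ℤ × ℤ × ℤ) := faceIdx N ×ˢ cellIdx N ×ˢ cellIdx N

@[simp] lemma mem_cells {x : ℤ × ℤ × ℤ} :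
    x ∈ cells N ↔ x.1 ∈ cellIdx N ∧ x.2.1 ∈ cellIdx N ∧ x.2.2 ∈ cellIdx N := by
  simp only [cells, Finset.mem_product]

@[simp] lemma mem_facesX {x : ℤ × ℤ × ℤ} :
    x ∈ facesX N ↔ x.1 ∈ faceIdx N ∧ x.2.1 ∈ cellIdx N ∧ x.2.2 ∈ cellIdx N := by
  simp only [facesX, Finset.mem_product]

end Index

def sevenPoint (h : ℝ) (E : ℤ → ℤ → ℤ → ℝ) (i j k : ℤ) : ℝ :=
  (E (i + 1) j k + E (i - 1) j k + E i (j + 1) k + E i (j - 1) k + E i j (k + 1) +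
    E i j (k - 1) - 6 * E i j k) / h ^ 2

def IsStencilMax (E : ℤ → ℤ → ℤ → ℝ) (i j k : ℤ) : Prop :=
  ∀ a b c : ℤ, |a - i| + |b - j| + |c - k| ≤ 1 → E a b c ≤ E i j k

section Stencil

variable {N : ℕ} {h : ℝ}

lemma lapC_eq_sevenPoint (φ : ℤ → ℤ → ℤ → ℝ) : lapC N h φ = sevenPoint h (nExt N φ) := rfl

lemma lapFX_eq_sevenPoint (f : ℤ → ℤ → ℤ → ℝ) : lapFX N h f = sevenPoint h (fExtX N f) := rfl

lemma lapFY_eq_lapFX (f : ℤ → ℤ → ℤ → ℝ) (i j k : ℤ) :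
    lapFY N h f i j k = lapFX N h (fun a b c => f b a c) j i k := by
  simp only [lapFY, lapFX, fExtX, fExtY]; ring

lemma lapFZ_eq_lapFX (f : ℤ → ℤ → ℤ → ℝ) (i j k : ℤ) :
    lapFZ N h f i j k = lapFX N h (fun a b c => f c b a) k j i := by
  simp only [lapFZ, lapFX, fExtX, fExtZ]; ring

lemma lapC_sub (φ ψ : ℤ → ℤ → ℤ → ℝ) (i j k : ℤ) :
    lapC N h (φ - ψ) i j k = lapC N h φ i j k - lapC N h ψ i j k := by
  simp only [lapC, nExt, Pi.sub_apply]; ring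

lemma lapFX_sub (f g : ℤ → ℤ → ℤ → ℝ) (i j k : ℤ) :
    lapFX N h (f - g) i j k = lapFX N h f i j k - lapFX N h g i j k := by
  simp only [lapFX, fExtX, Pi.sub_apply]; ring

lemma lapC_congr (hN : 0 < N) {φ ψ : ℤ → ℤ → ℤ → ℝ} (hφψ : CellEqOn N φ ψ) :
    lapC N h φ = lapC N h ψ := by
  rw [lapC_eq_sevenPoint, nExt_congr hN hφψ, ← lapC_eq_sevenPoint]

variable {E : ℤ → ℤ → ℤ → ℝ} {i j k : ℤ}

lemma sevenPoint_neg : sevenPoint h (-E) i j k = -sevenPoint h E i j k := by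
  simp only [sevenPoint, Pi.neg_apply]; ring

lemma sevenPoint_nonpos_of_isStencilMax (hE : IsStencilMax E i j k) :
    sevenPoint h E i j k ≤ 0 := by
  have h1 := hE (i + 1) j k (by simp)
  have h2 := hE (i - 1) j k (by simp)
  have h3 := hE i (j + 1) k (by simp)
  have h4 := hE i (j - 1) k (by simp)
  have h5 := hE i j (k + 1) (by simp)
  have h6 := hE i j (k - 1) (by simp)
  exact div_nonpos_of_nonpos_of_nonneg (by linarith) (sq_nonneg h)

lemma neighbors_eq_of_sevenPoint_eq_zero (hh : h ≠ 0) (hE : IsStencilMax E i j k)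
    (h0 : sevenPoint h E i j k = 0) :
    (E (i + 1) j k = E i j k ∧ E (i - 1) j k = E i j k) ∧
    (E i (j + 1) k = E i j k ∧ E i (j - 1) k = E i j k) ∧
    (E i j (k + 1) = E i j k ∧ E i j (k - 1) = E i j k) := by
  have h1 := hE (i + 1) j k (by simp)
  have h2 := hE (i - 1) j k (by simp)
  have h3 := hE i (j + 1) k (by simp)
  have h4 := hE i (j - 1) k (by simp)
  have h5 := hE i j (k + 1) (by simp)
  have h6 := hE i j (k - 1) (by simp)
  rw [sevenPoint, div_eq_zero_iff, or_iff_left (pow_ne_zero 2 hh)] at h0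
  refine ⟨⟨?_, ?_⟩, ⟨?_, ?_⟩, ⟨?_, ?_⟩⟩ <;> linarith

end Stencil

section MaximumPrinciple

variable {h : ℝ} {E : ℤ → ℤ → ℤ → ℝ} {S : Finset (ℤ × ℤ × ℤ)}

/-- The alternative in `hnbr` covers both homogeneous Dirichlet values (`0`) and ghost values
obtained by reflection (a value taken on `S`). -/
lemma nonpos_of_helmholtz
    (hnbr : ∀ i j k, (i, j, k) ∈ S → ∀ a b c : ℤ, |a - i| + |b - j| + |c - k| ≤ 1 →
      E a b c = 0 ∨ ∃ y ∈ S, E a b c = E y.1 y.2.1 y.2.2)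
    (heq : ∀ i j k, (i, j, k) ∈ S → -sevenPoint h E i j k + E i j k = 0) :
    ∀ i j k, (i, j, k) ∈ S → E i j k ≤ 0 := by
  intro i j k hx
  obtain ⟨⟨a, b, c⟩, hm, hmax⟩ :=
    S.exists_max_image (fun y => E y.1 y.2.1 y.2.2) ⟨_, hx⟩
  suffices E a b c ≤ 0 from (hmax _ hx).trans this
  by_contra! hpos
  have hloc : IsStencilMax E a b c := fun a' b' c' hd => by
    rcases hnbr a b c hm a' b' c' hd with h0 | ⟨y, hy, hey⟩
    · exact h0.le.trans hpos.le
    · exact hey ▸ hmax y hy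
  linarith [heq a b c hm, sevenPoint_nonpos_of_isStencilMax (h := h) hloc]

lemma eq_zero_of_helmholtz
    (hnbr : ∀ i j k, (i, j, k) ∈ S → ∀ a b c : ℤ, |a - i| + |b - j| + |c - k| ≤ 1 →
      E a b c = 0 ∨ ∃ y ∈ S, E a b c = E y.1 y.2.1 y.2.2)
    (heq : ∀ i j k, (i, j, k) ∈ S → -sevenPoint h E i j k + E i j k = 0) :
    ∀ i j k, (i, j, k) ∈ S → E i j k = 0 := by
  have hnbr' : ∀ i j k, (i, j, k) ∈ S → ∀ a b c : ℤ, |a - i| + |b - j| + |c - k| ≤ 1 →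
      (-E) a b c = 0 ∨ ∃ y ∈ S, (-E) a b c = (-E) y.1 y.2.1 y.2.2 := by
    simpa only [Pi.neg_apply, neg_eq_zero, neg_inj] using hnbr
  have heq' : ∀ i j k, (i, j, k) ∈ S → -sevenPoint h (-E) i j k + (-E) i j k = 0 := by
    intro i j k hx
    simp only [sevenPoint_neg, Pi.neg_apply]
    linarith [heq i j k hx]
  intro i j k hx
  have := nonpos_of_helmholtz hnbr' heq' i j k hx
  have := nonpos_of_helmholtz hnbr heq i j k hx
  simp only [Pi.neg_apply] at *
  linarith

variable {N : ℕ} (hN : 0 < N)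
include hN

lemma eq_zero_of_helmholtzC {d : ℤ → ℤ → ℤ → ℝ}
    (he : ∀ i ∈ cellIdx N, ∀ j ∈ cellIdx N, ∀ k ∈ cellIdx N, -lapC N h d i j k + d i j k = 0) :
    ∀ i ∈ cellIdx N, ∀ j ∈ cellIdx N, ∀ k ∈ cellIdx N, d i j k = 0 := by
  have := eq_zero_of_helmholtz (S := cells N) (E := nExt N d) (h := h)
    (fun _ _ _ _ a b c _ => Or.inr ⟨(clampIdx N a, clampIdx N b, clampIdx N c),
      mem_cells.2 ⟨clampIdx_mem hN a, clampIdx_mem hN b, clampIdx_mem hN c⟩,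
      (nExt_clampIdx hN d a b c).symm⟩)
    (fun i j k hx => by
      obtain ⟨hi, hj, hk⟩ := mem_cells.1 hx
      rw [← lapC_eq_sevenPoint, nExt_of_mem hi hj hk]
      exact he i hi j hj k hk)
  intro i hi j hj k hk
  rw [← nExt_of_mem (φ := d) hi hj hk]
  exact this i j k (mem_cells.2 ⟨hi, hj, hk⟩)

lemma eq_zero_of_helmholtzX {w : ℤ → ℤ → ℤ → ℝ}
    (hb : ∀ j ∈ cellIdx N, ∀ k ∈ cellIdx N, w 0 j k = 0 ∧ w N j k = 0)
    (he : ∀ i ∈ faceIdx N, ∀ j ∈ cellIdx N, ∀ k ∈ cellIdx N, -lapFX N h w i j k + w i j k = 0) :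
    ∀ i ∈ faceIdx N, ∀ j ∈ cellIdx N, ∀ k ∈ cellIdx N, w i j k = 0 := by
  have hnbr : ∀ i j k, (i, j, k) ∈ facesX N → ∀ a b c : ℤ,
      |a - i| + |b - j| + |c - k| ≤ 1 →
      fExtX N w a b c = 0 ∨ ∃ y ∈ facesX N, fExtX N w a b c = fExtX N w y.1 y.2.1 y.2.2 := by
    intro i j k hx a b c hd
    have hi := (mem_facesX.1 hx).1
    by_cases ha : a ∈ faceIdx N
    · exact Or.inr ⟨(a, clampIdx N b, clampIdx N c),
        mem_facesX.2 ⟨ha, clampIdx_mem hN b, clampIdx_mem hN c⟩,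
        by simp only [fExtX, clampIdx_clampIdx hN]⟩
    · have hai : |a - i| ≤ 1 := by linarith [abs_nonneg (b - j), abs_nonneg (c - k)]
      rw [abs_le] at hai
      rw [mem_faceIdx] at ha hi
      obtain rfl | rfl : a = 0 ∨ a = N := by omega
      · exact Or.inl (hb _ (clampIdx_mem hN b) _ (clampIdx_mem hN c)).1
      · exact Or.inl (hb _ (clampIdx_mem hN b) _ (clampIdx_mem hN c)).2
  have := eq_zero_of_helmholtz hnbr (h := h) fun i j k hx => by
    obtain ⟨hi, hj, hk⟩ := mem_facesX.1 hx
    rw [← lapFX_eq_sevenPoint, fExtX, clampIdx_of_mem hj, clampIdx_of_mem hk]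
    exact he i hi j hj k hk
  intro i hi j hj k hk
  simpa only [fExtX, clampIdx_of_mem hj, clampIdx_of_mem hk] using
    this i j k (mem_facesX.2 ⟨hi, hj, hk⟩)

end MaximumPrinciple

section Liouville

variable {N : ℕ} {h : ℝ}

lemma forall_mem_cellIdx_of_iff_succ {P : ℤ → Prop} (hP : ∀ i ∈ faceIdx N, P i ↔ P (i + 1))
    {a : ℤ} (ha : a ∈ cellIdx N) (hPa : P a) : ∀ b ∈ cellIdx N, P b := by
  have key : ∀ b : ℤ, 1 ≤ b → b ≤ N → (P b ↔ P 1) := by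
    intro b hb
    induction b, hb using Int.leInduction with
    | base => exact fun _ => Iff.rfl
    | succ b hb ih =>
      exact fun hbN => (hP b (mem_faceIdx.2 ⟨hb, by omega⟩)).symm.trans (ih (by omega))
  intro b hb
  rw [mem_cellIdx] at ha hb
  exact (key b hb.1 hb.2).2 ((key a ha.1 ha.2).1 hPa)

/-- The set where `φ` attains its maximum is closed under stencil neighbours, hence contains
every cell. -/
lemma eq_of_lapC_eq_zero (hN : 0 < N) (hh : h ≠ 0) {φ : ℤ → ℤ → ℤ → ℝ}
    (hl : ∀ i ∈ cellIdx N, ∀ j ∈ cellIdx N, ∀ k ∈ cellIdx N, lapC N h φ i j k = 0) :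
    ∀ i ∈ cellIdx N, ∀ j ∈ cellIdx N, ∀ k ∈ cellIdx N, φ i j k = φ 1 1 1 := by
  have h1 : (1 : ℤ) ∈ cellIdx N := mem_cellIdx.2 ⟨le_rfl, by omega⟩
  obtain ⟨⟨a, b, c⟩, hm, hmax⟩ :=
    (cells N).exists_max_image (fun y => φ y.1 y.2.1 y.2.2) ⟨(1, 1, 1), mem_cells.2 ⟨h1, h1, h1⟩⟩
  obtain ⟨ha, hb, hc⟩ := mem_cells.1 hm
  set E := nExt N φ
  have hnbr := fun i (hi : i ∈ cellIdx N) j (hj : j ∈ cellIdx N) k (hk : k ∈ cellIdx N)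
      (he : E i j k = φ a b c) => neighbors_eq_of_sevenPoint_eq_zero (E := E) hh
    (fun a' b' c' _ => he ▸ hmax (clampIdx N a', clampIdx N b', clampIdx N c')
      (mem_cells.2 ⟨clampIdx_mem hN a', clampIdx_mem hN b', clampIdx_mem hN c'⟩))
    (hl i hi j hj k hk)
  have hx : ∀ j ∈ cellIdx N, ∀ k ∈ cellIdx N, ∀ i ∈ faceIdx N,
      E i j k = φ a b c ↔ E (i + 1) j k = φ a b c := fun j hj k hk i hi =>
    ⟨fun he => ((hnbr i (mem_faceIdx_iff.1 hi).1 j hj k hk he).1.1).trans he,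
     fun he => by simpa using ((hnbr _ (mem_faceIdx_iff.1 hi).2 j hj k hk he).1.2).trans he⟩
  have hy : ∀ i ∈ cellIdx N, ∀ k ∈ cellIdx N, ∀ j ∈ faceIdx N,
      E i j k = φ a b c ↔ E i (j + 1) k = φ a b c := fun i hi k hk j hj =>
    ⟨fun he => ((hnbr i hi j (mem_faceIdx_iff.1 hj).1 k hk he).2.1.1).trans he,
     fun he => by simpa using ((hnbr i hi _ (mem_faceIdx_iff.1 hj).2 k hk he).2.1.2).trans he⟩
  have hz : ∀ i ∈ cellIdx N, ∀ j ∈ cellIdx N, ∀ k ∈ faceIdx N,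
      E i j k = φ a b c ↔ E i j (k + 1) = φ a b c := fun i hi j hj k hk =>
    ⟨fun he => ((hnbr i hi j hj k (mem_faceIdx_iff.1 hk).1 he).2.2.1).trans he,
     fun he => by simpa using ((hnbr i hi j hj _ (mem_faceIdx_iff.1 hk).2 he).2.2.2).trans he⟩
  have hall : ∀ i ∈ cellIdx N, ∀ j ∈ cellIdx N, ∀ k ∈ cellIdx N, E i j k = φ a b c :=
    fun i hi j hj => forall_mem_cellIdx_of_iff_succ (hz i hi j hj) hc
      (forall_mem_cellIdx_of_iff_succ (hy i hi c hc) hb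
        (forall_mem_cellIdx_of_iff_succ (hx b hb c hc) ha (nExt_of_mem ha hb hc) i hi) j hj)
  intro i hi j hj k hk
  calc φ i j k = E i j k := (nExt_of_mem hi hj hk).symm
    _ = E 1 1 1 := (hall i hi j hj k hk).trans (hall 1 h1 1 h1 1 h1).symm
    _ = φ 1 1 1 := nExt_of_mem h1 h1 h1

end Liouville

section Sums

variable {N : ℕ} {h : ℝ}

lemma sum_cellIdx_sub (g : ℤ → ℝ) : ∑ i ∈ cellIdx N, (g i - g (i - 1)) = g N - g 0 := by
  induction N with
  | zero => simp [cellIdx]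
  | succ n ih =>
    rw [cellIdx, Nat.cast_succ, ← Finset.insert_Icc_right_eq_Icc_add_one (by omega),
      Finset.sum_insert (by simp), ← cellIdx, ih, add_sub_cancel_right]
    ring

lemma sum_cellIdx_sub_eq_zero {g : ℤ → ℝ} (h0 : g 0 = 0) (hN : g N = 0) :
    ∑ i ∈ cellIdx N, (g i - g (i - 1)) = 0 := by
  rw [sum_cellIdx_sub, h0, hN, sub_zero]

lemma sum_divH_eq_zero {fx fy fz : ℤ → ℤ → ℤ → ℝ} (hf : NoPen N fx fy fz) :
    ∑ i ∈ cellIdx N, ∑ j ∈ cellIdx N, ∑ k ∈ cellIdx N, divH h fx fy fz i j k = 0 := by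
  obtain ⟨hx, hy, hz⟩ := hf
  have ex : ∑ i ∈ cellIdx N, ∑ j ∈ cellIdx N, ∑ k ∈ cellIdx N, (fx i j k - fx (i - 1) j k) = 0 := by
    simpa only [Finset.sum_sub_distrib] using
      sum_cellIdx_sub_eq_zero (g := fun i => ∑ j ∈ cellIdx N, ∑ k ∈ cellIdx N, fx i j k)
        (Finset.sum_eq_zero fun j hj => Finset.sum_eq_zero fun k hk => (hx j hj k hk).1)
        (Finset.sum_eq_zero fun j hj => Finset.sum_eq_zero fun k hk => (hx j hj k hk).2)
  have ey : ∑ i ∈ cellIdx N, ∑ j ∈ cellIdx N, ∑ k ∈ cellIdx N, (fy i j k - fy i (j - 1) k) = 0 :=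
    Finset.sum_eq_zero fun i hi => by
      simpa only [Finset.sum_sub_distrib] using
        sum_cellIdx_sub_eq_zero (g := fun j => ∑ k ∈ cellIdx N, fy i j k)
          (Finset.sum_eq_zero fun k hk => (hy i hi k hk).1)
          (Finset.sum_eq_zero fun k hk => (hy i hi k hk).2)
  have ez : ∑ i ∈ cellIdx N, ∑ j ∈ cellIdx N, ∑ k ∈ cellIdx N, (fz i j k - fz i j (k - 1)) = 0 :=
    Finset.sum_eq_zero fun i hi => Finset.sum_eq_zero fun j hj =>
      sum_cellIdx_sub_eq_zero (hz i hi j hj).1 (hz i hi j hj).2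
  have hsplit : ∀ i j k, divH h fx fy fz i j k = ((fx i j k - fx (i - 1) j k) +
      (fy i j k - fy i (j - 1) k) + (fz i j k - fz i j (k - 1))) / h := fun i j k => by
    rw [divH]; ring_nf
  simp only [hsplit, ← Finset.sum_div, Finset.sum_add_distrib, ex, ey, ez, add_zero, zero_div]

lemma divH_grad (φ : ℤ → ℤ → ℤ → ℝ) (i j k : ℤ) :
    divH h (Dx N h φ) (Dy N h φ) (Dz N h φ) i j k = lapC N h φ i j k := by
  simp only [divH, Dx, Dy, Dz, lapC, sub_add_cancel]; ring

lemma noPen_grad (φ : ℤ → ℤ → ℤ → ℝ) : NoPen N (Dx N h φ) (Dy N h φ) (Dz N h φ) := by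
  simp only [NoPen, Dx, Dy, Dz, nExt, zero_add, clampIdx_zero, clampIdx_natCast_add_one,
    sub_self, zero_div, and_self, implies_true]

lemma sum_lapC_eq_zero (φ : ℤ → ℤ → ℤ → ℝ) :
    ∑ i ∈ cellIdx N, ∑ j ∈ cellIdx N, ∑ k ∈ cellIdx N, lapC N h φ i j k = 0 := by
  simpa only [divH_grad] using sum_divH_eq_zero (h := h) (noPen_grad (h := h) φ)

end Sums

section Poisson

variable {N : ℕ} (hN : 0 < N) {h : ℝ}

lemma sum_cellIdx_const (c : ℝ) :
    ∑ _i ∈ cellIdx N, ∑ _j ∈ cellIdx N, ∑ _k ∈ cellIdx N, c = N ^ 3 * c := by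
  simp only [Finset.sum_const, cellIdx, Int.card_Icc, add_sub_cancel_right, Int.toNat_natCast,
    nsmul_eq_mul]
  ring

/-- Adding `Σ u` removes the constants from the kernel of the Neumann Laplacian, and summing
`poissonOp N h u = r` over the cells shows `Σ u = 0` whenever `Σ r = 0`. -/
def poissonOp (N : ℕ) (h : ℝ) : (ℤ × ℤ × ℤ → ℝ) →ₗ[ℝ] ℤ × ℤ × ℤ → ℝ where
  toFun u x := -lapC N h (fun a b c => u (a, b, c)) x.1 x.2.1 x.2.2 +
    ∑ i ∈ cellIdx N, ∑ j ∈ cellIdx N, ∑ k ∈ cellIdx N, u (i, j, k)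
  map_add' u v := by
    ext x
    simp only [lapC, nExt, Pi.add_apply, Finset.sum_add_distrib]
    ring
  map_smul' r u := by
    ext x
    simp only [lapC, nExt, Pi.smul_apply, smul_eq_mul, RingHom.id_apply, ← Finset.mul_sum]
    ring

lemma sum_neg_lapC_add_const (φ : ℤ → ℤ → ℤ → ℝ) (c : ℝ) :
    ∑ i ∈ cellIdx N, ∑ j ∈ cellIdx N, ∑ k ∈ cellIdx N, (-lapC N h φ i j k + c) = N ^ 3 * c := by
  simp only [Finset.sum_add_distrib, Finset.sum_neg_distrib, sum_lapC_eq_zero,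
    neg_zero, zero_add, sum_cellIdx_const]

include hN

lemma eq_zero_of_lapC_eq_zero_of_zeroMean (hh : h ≠ 0) {φ : ℤ → ℤ → ℤ → ℝ} (hφ : zeroMean N φ)
    (hl : ∀ i ∈ cellIdx N, ∀ j ∈ cellIdx N, ∀ k ∈ cellIdx N, lapC N h φ i j k = 0) :
    ∀ i ∈ cellIdx N, ∀ j ∈ cellIdx N, ∀ k ∈ cellIdx N, φ i j k = 0 := by
  have hconst := eq_of_lapC_eq_zero hN hh hl
  have h111 : (N : ℝ) ^ 3 * φ 1 1 1 = 0 := by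
    rw [← sum_cellIdx_const, ← hφ]
    exact Finset.sum_congr rfl fun i hi => Finset.sum_congr rfl fun j hj =>
      Finset.sum_congr rfl fun k hk => (hconst i hi j hj k hk).symm
  have hN3 : (N : ℝ) ^ 3 ≠ 0 := by positivity
  intro i hi j hj k hk
  rw [hconst i hi j hj k hk, (mul_eq_zero.1 h111).resolve_left hN3]

lemma eq_zero_of_neg_lapC_add_eq {φ r : ℤ → ℤ → ℤ → ℝ} {c : ℝ}
    (hr : ∑ i ∈ cellIdx N, ∑ j ∈ cellIdx N, ∑ k ∈ cellIdx N, r i j k = 0)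
    (he : ∀ i ∈ cellIdx N, ∀ j ∈ cellIdx N, ∀ k ∈ cellIdx N, -lapC N h φ i j k + c = r i j k) :
    c = 0 := by
  have := sum_neg_lapC_add_const (N := N) (h := h) φ c
  rw [Finset.sum_congr rfl fun i hi => Finset.sum_congr rfl fun j hj =>
    Finset.sum_congr rfl fun k hk => he i hi j hj k hk, hr] at this
  exact (mul_eq_zero.1 this.symm).resolve_left (by positivity)

lemma poisson_unique (hh : h ≠ 0) {p q : ℤ → ℤ → ℤ → ℝ} (hp : zeroMean N p) (hq : zeroMean N q)
    (hl : ∀ i ∈ cellIdx N, ∀ j ∈ cellIdx N, ∀ k ∈ cellIdx N, lapC N h p i j k = lapC N h q i j k) :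
    CellEqOn N p q := by
  have := eq_zero_of_lapC_eq_zero_of_zeroMean hN hh (φ := p - q)
    (by simp only [zeroMean, Pi.sub_apply, Finset.sum_sub_distrib] at *; rw [hp, hq, sub_zero])
    (fun i hi j hj k hk => by rw [lapC_sub, hl i hi j hj k hk, sub_self])
  exact fun i hi j hj k hk => sub_eq_zero.1 (this i hi j hj k hk)

lemma exists_poisson (hh : h ≠ 0) {r : ℤ → ℤ → ℤ → ℝ}
    (hr : ∑ i ∈ cellIdx N, ∑ j ∈ cellIdx N, ∑ k ∈ cellIdx N, r i j k = 0) :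
    ∃ q, zeroMean N q ∧
      ∀ i ∈ cellIdx N, ∀ j ∈ cellIdx N, ∀ k ∈ cellIdx N, -lapC N h q i j k = r i j k := by
  obtain ⟨u, -, hu⟩ := LinearMap.exists_eqOn_of_uniqueOn (cells N) (poissonOp N h)
    (fun u _ hu ⟨i, j, k⟩ hx => by
      have hu' : ∀ i ∈ cellIdx N, ∀ j ∈ cellIdx N, ∀ k ∈ cellIdx N,
          -lapC N h (fun a b c => u (a, b, c)) i j k +
            ∑ i ∈ cellIdx N, ∑ j ∈ cellIdx N, ∑ k ∈ cellIdx N, u (i, j, k) = 0 :=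
        fun i hi j hj k hk => hu (i, j, k) (mem_cells.2 ⟨hi, hj, hk⟩)
      have hmean := eq_zero_of_neg_lapC_add_eq hN (r := fun _ _ _ => 0) (by simp) hu'
      obtain ⟨hi, hj, hk⟩ := mem_cells.1 hx
      refine eq_zero_of_lapC_eq_zero_of_zeroMean hN hh hmean (fun i hi j hj k hk => ?_)
        i hi j hj k hk
      simpa only [hmean, add_zero, neg_eq_zero] using hu' i hi j hj k hk)
    (fun x => r x.1 x.2.1 x.2.2)
  have hu' : ∀ i ∈ cellIdx N, ∀ j ∈ cellIdx N, ∀ k ∈ cellIdx N,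
      -lapC N h (fun a b c => u (a, b, c)) i j k +
        ∑ i ∈ cellIdx N, ∑ j ∈ cellIdx N, ∑ k ∈ cellIdx N, u (i, j, k) = r i j k :=
    fun i hi j hj k hk => hu (i, j, k) (mem_cells.2 ⟨hi, hj, hk⟩)
  have hmean := eq_zero_of_neg_lapC_add_eq hN hr hu'
  refine ⟨fun a b c => u (a, b, c), hmean, fun i hi j hj k hk => ?_⟩
  simpa only [hmean, add_zero] using hu' i hi j hj k hk

end Poisson

section FaceHelmholtz

variable {N : ℕ} (hN : 0 < N) {h : ℝ}

def helmholtzXOp (N : ℕ) (h : ℝ) : (ℤ × ℤ × ℤ → ℝ) →ₗ[ℝ] ℤ × ℤ × ℤ → ℝ where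
  toFun u x := -lapFX N h (fun a b c => u (a, b, c)) x.1 x.2.1 x.2.2 + u x
  map_add' u v := by
    ext x
    simp only [lapFX, fExtX, Pi.add_apply]
    ring
  map_smul' r u := by
    ext x
    simp only [lapFX, fExtX, Pi.smul_apply, smul_eq_mul, RingHom.id_apply]
    ring

include hN

lemma exists_helmholtzX (g : ℤ → ℤ → ℤ → ℝ) :
    ∃ u : ℤ → ℤ → ℤ → ℝ, (∀ i j k, i ∉ faceIdx N → u i j k = 0) ∧
      ∀ i ∈ faceIdx N, ∀ j ∈ cellIdx N, ∀ k ∈ cellIdx N,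
        -lapFX N h u i j k + u i j k = g i j k := by
  have hoff : ∀ (u : ℤ × ℤ × ℤ → ℝ), (∀ x ∉ facesX N, u x = 0) →
      ∀ i j k, i ∉ faceIdx N → u (i, j, k) = 0 :=
    fun u hu i j k hi => hu _ fun hx => hi (mem_facesX.1 hx).1
  obtain ⟨u, hu0, hu⟩ := LinearMap.exists_eqOn_of_uniqueOn (facesX N) (helmholtzXOp N h)
    (fun u hu0 hu ⟨i, j, k⟩ hx => by
      obtain ⟨hi, hj, hk⟩ := mem_facesX.1 hx
      exact eq_zero_of_helmholtzX hN (w := fun a b c => u (a, b, c))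
        (fun j _ k _ => ⟨hoff u hu0 _ _ _ zero_notMem_faceIdx,
          hoff u hu0 _ _ _ natCast_notMem_faceIdx⟩)
        (fun i hi j hj k hk => hu (i, j, k) (mem_facesX.2 ⟨hi, hj, hk⟩)) i hi j hj k hk)
    (fun x => g x.1 x.2.1 x.2.2)
  exact ⟨fun a b c => u (a, b, c), hoff u hu0,
    fun i hi j hj k hk => hu (i, j, k) (mem_facesX.2 ⟨hi, hj, hk⟩)⟩

lemma exists_projSol (gx gy gz : ℤ → ℤ → ℤ → ℝ) : ∃ ux uy uz, ProjSol N h gx gy gz ux uy uz := by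
  obtain ⟨ux, hx0, hx⟩ := exists_helmholtzX hN (h := h) fun a b c => -gx a b c
  obtain ⟨uy, hy0, hy⟩ := exists_helmholtzX hN (h := h) fun a b c => -gy b a c
  obtain ⟨uz, hz0, hz⟩ := exists_helmholtzX hN (h := h) fun a b c => -gz c b a
  refine ⟨ux, fun a b c => uy b a c, fun a b c => uz c b a,
    ⟨fun j _ k _ => ⟨hx0 _ _ _ zero_notMem_faceIdx, hx0 _ _ _ natCast_notMem_faceIdx⟩,
      fun i _ k _ => ⟨hy0 _ _ _ zero_notMem_faceIdx, hy0 _ _ _ natCast_notMem_faceIdx⟩,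
      fun i _ j _ => ⟨hz0 _ _ _ zero_notMem_faceIdx, hz0 _ _ _ natCast_notMem_faceIdx⟩⟩,
    hx, fun i hi j hj k hk => ?_, fun i hi j hj k hk => ?_⟩
  · rw [lapFY_eq_lapFX]; exact hy j hj i hi k hk
  · rw [lapFZ_eq_lapFX]; exact hz k hk j hj i hi

lemma eqOn_of_helmholtzX_eq {u v : ℤ → ℤ → ℤ → ℝ}
    (hu : ∀ j ∈ cellIdx N, ∀ k ∈ cellIdx N, u 0 j k = 0 ∧ u N j k = 0)
    (hv : ∀ j ∈ cellIdx N, ∀ k ∈ cellIdx N, v 0 j k = 0 ∧ v N j k = 0)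
    (he : ∀ i ∈ faceIdx N, ∀ j ∈ cellIdx N, ∀ k ∈ cellIdx N,
      -lapFX N h u i j k + u i j k = -lapFX N h v i j k + v i j k) :
    ∀ i ∈ Finset.Icc 0 (N : ℤ), ∀ j ∈ cellIdx N, ∀ k ∈ cellIdx N, u i j k = v i j k := by
  have hw := eq_zero_of_helmholtzX hN (h := h) (w := u - v)
    (fun j hj k hk => by simp only [Pi.sub_apply, (hu j hj k hk).1, (hv j hj k hk).1,
      (hu j hj k hk).2, (hv j hj k hk).2, sub_self, and_self])
    (fun i hi j hj k hk => by
      simp only [lapFX_sub, Pi.sub_apply]; linarith [he i hi j hj k hk])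
  intro i hi j hj k hk
  by_cases hf : i ∈ faceIdx N
  · simpa only [Pi.sub_apply, sub_eq_zero] using hw i hf j hj k hk
  · obtain rfl | rfl : i = 0 ∨ i = N := by simp only [mem_faceIdx, Finset.mem_Icc] at hf hi; omega
    · rw [(hu j hj k hk).1, (hv j hj k hk).1]
    · rw [(hu j hj k hk).2, (hv j hj k hk).2]

lemma projSol_unique {gx gy gz ux uy uz vx vy vz : ℤ → ℤ → ℤ → ℝ}
    (hu : ProjSol N h gx gy gz ux uy uz) (hv : ProjSol N h gx gy gz vx vy vz) :
    MacEqOn N vx vy vz ux uy uz := by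
  obtain ⟨⟨hux0, huy0, huz0⟩, hux, huy, huz⟩ := hu
  obtain ⟨⟨hvx0, hvy0, hvz0⟩, hvx, hvy, hvz⟩ := hv
  refine ⟨eqOn_of_helmholtzX_eq hN (h := h) hvx0 hux0 fun i hi j hj k hk => ?_,
    fun i hi j hj k hk => eqOn_of_helmholtzX_eq hN (h := h) (u := fun a b c => vy b a c)
      (v := fun a b c => uy b a c) hvy0 huy0 (fun j hj i hi k hk => ?_) j hj i hi k hk,
    fun i hi j hj k hk => eqOn_of_helmholtzX_eq hN (h := h) (u := fun a b c => vz c b a)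
      (v := fun a b c => uz c b a) (fun j hj i hi => hvz0 i hi j hj)
      (fun j hj i hi => huz0 i hi j hj) (fun k hk j hj i hi => ?_) k hk j hj i hi⟩
  · rw [hvx i hi j hj k hk, hux i hi j hj k hk]
  · rw [← lapFY_eq_lapFX, ← lapFY_eq_lapFX, hvy i hi j hj k hk, huy i hi j hj k hk]
  · rw [← lapFZ_eq_lapFX, ← lapFZ_eq_lapFX, hvz i hi j hj k hk, huz i hi j hj k hk]

end FaceHelmholtz

def interiorLapFX (N : ℕ) (h : ℝ) (ux : ℤ → ℤ → ℤ → ℝ) (i j k : ℤ) : ℝ :=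
  if i ∈ faceIdx N then lapFX N h ux i j k else 0

def interiorLapFY (N : ℕ) (h : ℝ) (uy : ℤ → ℤ → ℤ → ℝ) (i j k : ℤ) : ℝ :=
  if j ∈ faceIdx N then lapFY N h uy i j k else 0

def interiorLapFZ (N : ℕ) (h : ℝ) (uz : ℤ → ℤ → ℤ → ℝ) (i j k : ℤ) : ℝ :=
  if k ∈ faceIdx N then lapFZ N h uz i j k else 0

lemma interiorLapFY_eq (N : ℕ) (h : ℝ) (uy : ℤ → ℤ → ℤ → ℝ) (i j k : ℤ) :
    interiorLapFY N h uy i j k = interiorLapFX N h (fun a b c => uy b a c) j i k := by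
  simp only [interiorLapFY, interiorLapFX, lapFY_eq_lapFX]

lemma interiorLapFZ_eq (N : ℕ) (h : ℝ) (uz : ℤ → ℤ → ℤ → ℝ) (i j k : ℤ) :
    interiorLapFZ N h uz i j k = interiorLapFX N h (fun a b c => uz c b a) k j i := by
  simp only [interiorLapFZ, interiorLapFX, lapFZ_eq_lapFX]

section Commutation

variable {N : ℕ} (hN : 0 < N) {h : ℝ}
include hN

/-- Reflecting `u^x` oddly across the boundary faces, the full stencil vanishes there and the
difference `(u^x_a - u^x_{a-1}) / h` acquires exactly its Neumann ghost values; away from the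
boundary, difference operators simply commute. -/
lemma interiorLapFX_sub_eq_lapC {ux : ℤ → ℤ → ℤ → ℝ}
    (hb : ∀ j ∈ cellIdx N, ∀ k ∈ cellIdx N, ux 0 j k = 0 ∧ ux N j k = 0)
    {i : ℤ} (hi : i ∈ cellIdx N) (j k : ℤ) :
    (interiorLapFX N h ux i j k - interiorLapFX N h ux (i - 1) j k) / h =
      lapC N h (fun a b c => (ux a b c - ux (a - 1) b c) / h) i j k := by
  have hb' : ∀ b c,
      ux 0 (clampIdx N b) (clampIdx N c) = 0 ∧ ux N (clampIdx N b) (clampIdx N c) = 0 :=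
    fun b c => hb _ (clampIdx_mem hN b) _ (clampIdx_mem hN c)
  simp only [interiorLapFX, lapC, nExt, lapFX, fExtX, clampIdx_of_mem hi]
  rw [mem_cellIdx] at hi
  rcases (by omega :
      (i = 1 ∧ (N : ℤ) = 1) ∨ (i = 1 ∧ 1 < (N : ℤ)) ∨ (1 < i ∧ i < N) ∨ (1 < i ∧ i = N))
    with ⟨rfl, hN1⟩ | ⟨rfl, hN1⟩ | ⟨h1, h2⟩ | ⟨h1, rfl⟩
  · have hc : ∀ a, clampIdx N a = 1 := fun a => by unfold clampIdx; omega
    simp only [hc, mem_faceIdx, hN1, if_neg (by omega : ¬(1 ≤ (1 : ℤ) ∧ (1 : ℤ) ≤ 1 - 1)),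
      if_neg (by omega : ¬(1 ≤ (1 - 1 : ℤ) ∧ (1 - 1 : ℤ) ≤ 1 - 1))]
    ring
  · have hf1 : (1 : ℤ) ∈ faceIdx N := mem_faceIdx.2 ⟨le_rfl, by omega⟩
    rw [if_pos hf1, if_neg (by simp),
      clampIdx_of_mem (i := 1 + 1) (mem_cellIdx.2 ⟨by omega, by omega⟩), sub_self,
      clampIdx_zero, clampIdx_of_mem (i := 1) (mem_cellIdx.2 ⟨le_rfl, by omega⟩)]
    simp only [add_sub_cancel_right, sub_self, hb']
    ring
  · have hf1 : i ∈ faceIdx N := mem_faceIdx.2 ⟨by omega, by omega⟩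
    have hf2 : i - 1 ∈ faceIdx N := mem_faceIdx.2 ⟨by omega, by omega⟩
    rw [if_pos hf1, if_pos hf2, clampIdx_of_mem (i := i + 1) (mem_cellIdx.2 ⟨by omega, by omega⟩),
      clampIdx_of_mem (i := i - 1) (mem_cellIdx.2 ⟨by omega, by omega⟩)]
    simp only [sub_add_cancel, add_sub_cancel_right]
    ring
  · have hf2 : (N : ℤ) - 1 ∈ faceIdx N := mem_faceIdx.2 ⟨by omega, le_rfl⟩
    rw [if_neg natCast_notMem_faceIdx, if_pos hf2, clampIdx_natCast_add_one,
      clampIdx_of_mem (i := N - 1) (mem_cellIdx.2 ⟨by omega, by omega⟩),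
      clampIdx_of_mem (i := N) (mem_cellIdx.2 ⟨by omega, le_rfl⟩)]
    simp only [sub_add_cancel, hb']
    ring

lemma interiorLapFY_sub_eq_lapC {uy : ℤ → ℤ → ℤ → ℝ}
    (hb : ∀ i ∈ cellIdx N, ∀ k ∈ cellIdx N, uy i 0 k = 0 ∧ uy i N k = 0)
    (i : ℤ) {j : ℤ} (hj : j ∈ cellIdx N) (k : ℤ) :
    (interiorLapFY N h uy i j k - interiorLapFY N h uy i (j - 1) k) / h =
      lapC N h (fun a b c => (uy a b c - uy a (b - 1) c) / h) i j k := by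
  have := interiorLapFX_sub_eq_lapC hN (h := h) (ux := fun a b c => uy b a c) hb hj i k
  rw [interiorLapFY_eq, interiorLapFY_eq, this]
  simp only [lapC, nExt]
  ring

lemma interiorLapFZ_sub_eq_lapC {uz : ℤ → ℤ → ℤ → ℝ}
    (hb : ∀ i ∈ cellIdx N, ∀ j ∈ cellIdx N, uz i j 0 = 0 ∧ uz i j N = 0)
    (i j : ℤ) {k : ℤ} (hk : k ∈ cellIdx N) :
    (interiorLapFZ N h uz i j k - interiorLapFZ N h uz i j (k - 1)) / h =
      lapC N h (fun a b c => (uz a b c - uz a b (c - 1)) / h) i j k := by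
  have := interiorLapFX_sub_eq_lapC hN (h := h) (ux := fun a b c => uz c b a)
    (fun j hj i hi => hb i hi j hj) hk j i
  rw [interiorLapFZ_eq, interiorLapFZ_eq, this]
  simp only [lapC, nExt]
  ring

lemma divH_interiorLap_eq_lapC_divH {ux uy uz : ℤ → ℤ → ℤ → ℝ} (hu : NoPen N ux uy uz)
    {i j k : ℤ} (hi : i ∈ cellIdx N) (hj : j ∈ cellIdx N) (hk : k ∈ cellIdx N) :
    divH h (interiorLapFX N h ux) (interiorLapFY N h uy) (interiorLapFZ N h uz) i j k =
      lapC N h (divH h ux uy uz) i j k := by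
  have ex := interiorLapFX_sub_eq_lapC hN (h := h) hu.1 hi j k
  have ey := interiorLapFY_sub_eq_lapC hN (h := h) hu.2.1 i hj k
  have ez := interiorLapFZ_sub_eq_lapC hN (h := h) hu.2.2 i j hk
  have hsplit : lapC N h (divH h ux uy uz) i j k =
      lapC N h (fun a b c => (ux a b c - ux (a - 1) b c) / h) i j k +
      lapC N h (fun a b c => (uy a b c - uy a (b - 1) c) / h) i j k +
      lapC N h (fun a b c => (uz a b c - uz a b (c - 1)) / h) i j k := by
    simp only [lapC, nExt, divH]; ring
  rw [hsplit, ← ex, ← ey, ← ez, divH]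
  ring

end Commutation

def MomentumEq (N : ℕ) (h : ℝ) (fx fy fz ux uy uz p : ℤ → ℤ → ℤ → ℝ) : Prop :=
  (∀ i ∈ faceIdx N, ∀ j ∈ cellIdx N, ∀ k ∈ cellIdx N,
    -lapFX N h ux i j k + ux i j k + Dx N h p i j k = -fx i j k) ∧
  (∀ i ∈ cellIdx N, ∀ j ∈ faceIdx N, ∀ k ∈ cellIdx N,
    -lapFY N h uy i j k + uy i j k + Dy N h p i j k = -fy i j k) ∧
  (∀ i ∈ cellIdx N, ∀ j ∈ cellIdx N, ∀ k ∈ faceIdx N,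
    -lapFZ N h uz i j k + uz i j k + Dz N h p i j k = -fz i j k)

section Stokes

variable {N : ℕ} (hN : 0 < N) {h : ℝ} {fx fy fz ux uy uz p : ℤ → ℤ → ℤ → ℝ}

lemma projSol_iff :
    ProjSol N h (fun a b c => fx a b c + Dx N h p a b c) (fun a b c => fy a b c + Dy N h p a b c)
      (fun a b c => fz a b c + Dz N h p a b c) ux uy uz ↔
    NoPen N ux uy uz ∧ MomentumEq N h fx fy fz ux uy uz p := by
  simp only [ProjSol, MomentumEq, neg_add', eq_sub_iff_add_eq]

lemma StokesSol.momentumEq (hs : StokesSol N h fx fy fz ux uy uz p) :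
    MomentumEq N h fx fy fz ux uy uz p :=
  ⟨hs.2.2.1, hs.2.2.2.1, hs.2.2.2.2.1⟩

lemma interiorLapFX_eq_of_momentum {ux fx gx : ℤ → ℤ → ℤ → ℝ}
    (hu : ∀ j ∈ cellIdx N, ∀ k ∈ cellIdx N, ux 0 j k = 0 ∧ ux N j k = 0)
    (hf : ∀ j ∈ cellIdx N, ∀ k ∈ cellIdx N, fx 0 j k = 0 ∧ fx N j k = 0)
    (hg : ∀ j ∈ cellIdx N, ∀ k ∈ cellIdx N, gx 0 j k = 0 ∧ gx N j k = 0)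
    (hm : ∀ i ∈ faceIdx N, ∀ j ∈ cellIdx N, ∀ k ∈ cellIdx N,
      -lapFX N h ux i j k + ux i j k + gx i j k = -fx i j k) :
    ∀ a ∈ Finset.Icc 0 (N : ℤ), ∀ j ∈ cellIdx N, ∀ k ∈ cellIdx N,
      interiorLapFX N h ux a j k = ux a j k + gx a j k + fx a j k := by
  intro a ha j hj k hk
  by_cases hfa : a ∈ faceIdx N
  · rw [interiorLapFX, if_pos hfa]; linarith [hm a hfa j hj k hk]
  · rw [interiorLapFX, if_neg hfa]
    obtain rfl | rfl : a = 0 ∨ a = N := by simp only [mem_faceIdx, Finset.mem_Icc] at hfa ha; omega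
    · rw [(hu j hj k hk).1, (hf j hj k hk).1, (hg j hj k hk).1]; ring
    · rw [(hu j hj k hk).2, (hf j hj k hk).2, (hg j hj k hk).2]; ring

include hN

lemma lapC_divH_of_momentumEq (hf : NoPen N fx fy fz) (hu : NoPen N ux uy uz)
    (hm : MomentumEq N h fx fy fz ux uy uz p) :
    ∀ i ∈ cellIdx N, ∀ j ∈ cellIdx N, ∀ k ∈ cellIdx N,
      -lapC N h (divH h ux uy uz) i j k + divH h ux uy uz i j k + lapC N h p i j k =
        -divH h fx fy fz i j k := by
  obtain ⟨hpx, hpy, hpz⟩ := noPen_grad (h := h) p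
  have ex := interiorLapFX_eq_of_momentum hu.1 hf.1 hpx hm.1
  have ey := interiorLapFX_eq_of_momentum (ux := fun a b c => uy b a c)
    (fx := fun a b c => fy b a c) (gx := fun a b c => Dy N h p b a c) hu.2.1 hf.2.1 hpy
    (fun j hj i hi k hk => by rw [← lapFY_eq_lapFX]; exact hm.2.1 i hi j hj k hk)
  have ez := interiorLapFX_eq_of_momentum (ux := fun a b c => uz c b a)
    (fx := fun a b c => fz c b a) (gx := fun a b c => Dz N h p c b a)
    (fun j hj i hi => hu.2.2 i hi j hj) (fun j hj i hi => hf.2.2 i hi j hj)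
    (fun j hj i hi => hpz i hi j hj)
    (fun k hk j hj i hi => by rw [← lapFZ_eq_lapFX]; exact hm.2.2 i hi j hj k hk)
  intro i hi j hj k hk
  have hc := divH_interiorLap_eq_lapC_divH hN (h := h) hu hi hj hk
  obtain ⟨hi₀, hi₁⟩ := mem_cellIdx_iff_mem_Icc.1 hi
  obtain ⟨hj₀, hj₁⟩ := mem_cellIdx_iff_mem_Icc.1 hj
  obtain ⟨hk₀, hk₁⟩ := mem_cellIdx_iff_mem_Icc.1 hk
  rw [divH, interiorLapFY_eq, interiorLapFY_eq, interiorLapFZ_eq, interiorLapFZ_eq,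
    ex _ hi₁ j hj k hk, ex _ hi₀ j hj k hk, ey _ hj₁ i hi k hk, ey _ hj₀ i hi k hk,
    ez _ hk₁ j hj i hi, ez _ hk₀ j hj i hi] at hc
  rw [← divH_grad (N := N) p]
  simp only [divH] at hc ⊢
  linear_combination hc

lemma StokesSol.neg_lapC_eq (hf : NoPen N fx fy fz) (hs : StokesSol N h fx fy fz ux uy uz p) :
    ∀ i ∈ cellIdx N, ∀ j ∈ cellIdx N, ∀ k ∈ cellIdx N,
      -lapC N h p i j k = divH h fx fy fz i j k := by
  have hdiv := hs.2.2.2.2.2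
  intro i hi j hj k hk
  have hlap : lapC N h (divH h ux uy uz) i j k = 0 := by
    rw [lapC_congr hN (ψ := 0) hdiv]
    simp only [lapC, nExt, Pi.zero_apply]
    ring
  linarith [lapC_divH_of_momentumEq hN hf hs.1 hs.momentumEq i hi j hj k hk,
    hdiv i hi j hj k hk, hlap]

lemma StokesSol.cellEqOn_pressure (hh : h ≠ 0) (hf : NoPen N fx fy fz)
    (hs : StokesSol N h fx fy fz ux uy uz p) {q : ℤ → ℤ → ℤ → ℝ} (hq0 : zeroMean N q)
    (hq : ∀ i ∈ cellIdx N, ∀ j ∈ cellIdx N, ∀ k ∈ cellIdx N,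
      -lapC N h q i j k = divH h fx fy fz i j k) :
    CellEqOn N p q :=
  poisson_unique hN hh hs.2.1 hq0 fun i hi j hj k hk => by
    linarith [hs.neg_lapC_eq hN hf i hi j hj k hk, hq i hi j hj k hk]

lemma divH_eq_zero_of_projSol (hf : NoPen N fx fy fz)
    (hp : ∀ i ∈ cellIdx N, ∀ j ∈ cellIdx N, ∀ k ∈ cellIdx N,
      -lapC N h p i j k = divH h fx fy fz i j k)
    (hu : ProjSol N h (fun a b c => fx a b c + Dx N h p a b c)
      (fun a b c => fy a b c + Dy N h p a b c) (fun a b c => fz a b c + Dz N h p a b c) ux uy uz) :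
    ∀ i ∈ cellIdx N, ∀ j ∈ cellIdx N, ∀ k ∈ cellIdx N, divH h ux uy uz i j k = 0 := by
  obtain ⟨hnp, hm⟩ := projSol_iff.1 hu
  refine eq_zero_of_helmholtzC hN (h := h) fun i hi j hj k hk => ?_
  linarith [lapC_divH_of_momentumEq hN hf hnp hm i hi j hj k hk, hp i hi j hj k hk]

lemma stokesSol_of_projSol (hf : NoPen N fx fy fz) (hp0 : zeroMean N p)
    (hp : ∀ i ∈ cellIdx N, ∀ j ∈ cellIdx N, ∀ k ∈ cellIdx N,
      -lapC N h p i j k = divH h fx fy fz i j k)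
    (hu : ProjSol N h (fun a b c => fx a b c + Dx N h p a b c)
      (fun a b c => fy a b c + Dy N h p a b c) (fun a b c => fz a b c + Dz N h p a b c) ux uy uz) :
    StokesSol N h fx fy fz ux uy uz p :=
  have ⟨hnp, hx, hy, hz⟩ := projSol_iff.1 hu
  ⟨hnp, hp0, hx, hy, hz, divH_eq_zero_of_projSol hN hf hp hu⟩

lemma projSol_of_stokesSol (hh : h ≠ 0) (hf : NoPen N fx fy fz)
    (hs : StokesSol N h fx fy fz ux uy uz p) {q : ℤ → ℤ → ℤ → ℝ} (hq0 : zeroMean N q)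
    (hq : ∀ i ∈ cellIdx N, ∀ j ∈ cellIdx N, ∀ k ∈ cellIdx N,
      -lapC N h q i j k = divH h fx fy fz i j k) :
    ProjSol N h (fun a b c => fx a b c + Dx N h q a b c) (fun a b c => fy a b c + Dy N h q a b c)
      (fun a b c => fz a b c + Dz N h q a b c) ux uy uz := by
  have hD := nExt_congr hN (hs.cellEqOn_pressure hN hh hf hq0 hq)
  have hm := hs.momentumEq
  rw [MomentumEq, show Dx N h p = Dx N h q by ext; simp only [Dx, hD],
    show Dy N h p = Dy N h q by ext; simp only [Dy, hD],
    show Dz N h p = Dz N h q by ext; simp only [Dz, hD]] at hm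
  exact projSol_iff.2 ⟨hs.1, hm⟩

end Stokes

/-- for a MAC field `f` with no-penetration boundary values,
(1) the discrete Stokes problem `-Δ_h u + u + ∇_h p = -f`, `∇_h·u = 0` has a
solution `(u,p)`, unique among no-penetration/free-slip fields and zero-mean
pressures; and (2) this `u` is also the unique no-penetration/free-slip
solution of `-Δ_h u + u = -P_H^h f`, where `P_H^h f = f + ∇_h q` and `q` is
the unique zero-mean solution of `-Δ_h q = ∇_h · f`. -/
theorem stokes_two_forms (L : ℝ) (hL : 0 < L) (N : ℕ) (hN : 0 < N)
    (fx fy fz : ℤ → ℤ → ℤ → ℝ) (hf : NoPen N fx fy fz) :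
    (∃ ux uy uz p, StokesSol N (L / N) fx fy fz ux uy uz p ∧
      ∀ vx vy vz q, StokesSol N (L / N) fx fy fz vx vy vz q →
        MacEqOn N vx vy vz ux uy uz ∧ CellEqOn N q p) ∧
    (∀ ux uy uz p, StokesSol N (L / N) fx fy fz ux uy uz p →
      ∀ q : ℤ → ℤ → ℤ → ℝ, zeroMean N q →
        (∀ i ∈ cellIdx N, ∀ j ∈ cellIdx N, ∀ k ∈ cellIdx N,
          -lapC N (L / N) q i j k = divH (L / N) fx fy fz i j k) →
        ProjSol N (L / N)
          (fun a b c => fx a b c + Dx N (L / N) q a b c)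
          (fun a b c => fy a b c + Dy N (L / N) q a b c)
          (fun a b c => fz a b c + Dz N (L / N) q a b c) ux uy uz ∧
        ∀ vx vy vz, ProjSol N (L / N)
            (fun a b c => fx a b c + Dx N (L / N) q a b c)
            (fun a b c => fy a b c + Dy N (L / N) q a b c)
            (fun a b c => fz a b c + Dz N (L / N) q a b c) vx vy vz →
          MacEqOn N vx vy vz ux uy uz) := by
  have hh : L / N ≠ 0 := div_ne_zero hL.ne' (Nat.cast_ne_zero.2 hN.ne')
  obtain ⟨q, hq0, hq⟩ := exists_poisson hN hh (sum_divH_eq_zero hf)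
  obtain ⟨ux, uy, uz, hu⟩ := exists_projSol hN (h := L / N)
    (fun a b c => fx a b c + Dx N (L / N) q a b c) (fun a b c => fy a b c + Dy N (L / N) q a b c)
    (fun a b c => fz a b c + Dz N (L / N) q a b c)
  refine ⟨⟨ux, uy, uz, q, stokesSol_of_projSol hN hf hq0 hq hu, fun vx vy vz p hv =>
      ⟨projSol_unique hN hu (projSol_of_stokesSol hN hh hf hv hq0 hq),
        hv.cellEqOn_pressure hN hh hf hq0 hq⟩⟩,
    fun ux uy uz p hs q hq0 hq => ?_⟩
  have hproj := projSol_of_stokesSol hN hh hf hs hq0 hq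
  exact ⟨hproj, fun vx vy vz hv => projSol_unique hN hproj hv⟩
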